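/- arXiv:2009.08816 — 2 statements merged into one kernel-verified Lean document; each statement's English description precedes it below -/
import Mathlib

section
/- For all integers L ≥ 1, M with 1 ≤ M ≤ 2^L, and δ ≥ 1 with M − δ ≥ 0, the inequality log₂ C(2^L, M) − log₂ ( C(2^L, M−δ) / C(M, M−δ) ) ≥ δ·L − δ·(M−1)·log₂(e)/(2^L − M + 1) − log₂(δ!) holds. -/
open Real

/-!
Since `C(n, m) · C(m, m - d) = C(n, m - d) · C(n - m + d, d)`, the left-hand side is
`log₂ C(2^L - M + δ, δ)`. Each of the `δ` factors of the falling factorial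
`(2^L - M + δ) ⋯ (2^L - M + 1) = δ! · C(2^L - M + δ, δ)` is at least `x = 2^L - M + 1`, so the
left-hand side is at least `δ log₂ x - log₂ δ!`, and `log₂ x ≥ L - (M - 1) log₂ e / x`
because `ln (2^L / x) ≤ 2^L / x - 1 = (M - 1) / x`.
-/

theorem Nat.choose_mul_choose_sub {n m d : ℕ} (hd : d ≤ m) (hm : m ≤ n) :
    n.choose m * m.choose (m - d) = n.choose (m - d) * (n - m + d).choose d := by
  have h := Nat.choose_mul (n := n) (Nat.sub_le m d)
  rwa [Nat.sub_sub_self hd, show n - (m - d) = n - m + d by omega] at h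

theorem Real.logb_choose_sub_logb_div_choose {b : ℝ} {n m d : ℕ} (hd : d ≤ m) (hm : m ≤ n) :
    logb b (n.choose m) - logb b ((n.choose (m - d) : ℝ) / m.choose (m - d)) =
      logb b ((n - m + d).choose d) := by
  have hpos : ∀ {p q : ℕ}, q ≤ p → (p.choose q : ℝ) ≠ 0 := fun h =>
    Nat.cast_ne_zero.mpr (Nat.choose_pos h).ne'
  have hprod : (n.choose m : ℝ) * m.choose (m - d) = n.choose (m - d) * (n - m + d).choose d := by
    exact_mod_cast Nat.choose_mul_choose_sub hd hm
  have hsub : m - d ≤ m := Nat.sub_le m d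
  have hlog := congrArg (logb b) hprod
  rw [logb_mul (hpos hm) (hpos hsub),
    logb_mul (hpos (hsub.trans hm)) (hpos (by omega : d ≤ n - m + d))] at hlog
  rw [logb_div (hpos (hsub.trans hm)) (hpos hsub)]
  linarith

theorem Real.mul_logb_sub_logb_factorial_le_logb_choose {b : ℝ} (hb : 1 < b) {n r : ℕ}
    (hr : r ≤ n) : r * logb b (n + 1 - r : ℕ) - logb b r.factorial ≤ logb b (n.choose r) := by
  have hbase : (0 : ℝ) < (n + 1 - r : ℕ) := by exact_mod_cast (by omega : 0 < n + 1 - r)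
  rw [← logb_pow, ← logb_div (by positivity) (by positivity)]
  exact logb_le_logb_of_le hb (by positivity) (Nat.pow_le_choose r n)

theorem Real.logb_sub_mul_logb_exp_div_le {b a x : ℝ} (hb : 1 < b) (ha : 0 < a) (hx : 0 < x) :
    logb b a - (a - x) * logb b (exp 1) / x ≤ logb b x := by
  have hratio : log a - log x ≤ (a - x) / x := by
    rw [← log_div ha.ne' hx.ne']
    calc log (a / x) ≤ a / x - 1 := log_le_sub_one_of_pos (by positivity)
      _ = (a - x) / x := by field_simp
  have hexp : (a - x) * logb b (exp 1) / x = (a - x) / x / log b := by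
    rw [logb, log_exp]
    ring
  rw [hexp, sub_le_iff_le_add', ← sub_le_iff_le_add, logb, logb, ← sub_div]
  exact div_le_div_of_nonneg_right hratio (log_pos hb).le

theorem stmt_2_general (L M δ : ℕ) (hMle : M ≤ 2 ^ L) (hδM : δ ≤ M) :
    Real.logb 2 (Nat.choose (2 ^ L) M) -
      Real.logb 2 ((Nat.choose (2 ^ L) (M - δ) : ℝ) / (Nat.choose M (M - δ) : ℝ)) ≥
    (δ : ℝ) * L - (δ : ℝ) * ((M : ℝ) - 1) * Real.logb 2 (Real.exp 1) /
        ((2 ^ L : ℝ) - (M : ℝ) + 1) - Real.logb 2 (Nat.factorial δ) := by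
  have hx : (0 : ℝ) < 2 ^ L - M + 1 := by
    have : (M : ℝ) ≤ 2 ^ L := by exact_mod_cast hMle
    linarith
  have hfalling : ((2 ^ L - M + δ + 1 - δ : ℕ) : ℝ) = 2 ^ L - M + 1 := by
    rw [show 2 ^ L - M + δ + 1 - δ = 2 ^ L - M + 1 by omega]
    push_cast [hMle]
    ring
  have hchoose := mul_logb_sub_logb_factorial_le_logb_choose one_lt_two
    (Nat.le_add_left δ (2 ^ L - M))
  rw [hfalling] at hchoose
  have hlog := logb_sub_mul_logb_exp_div_le one_lt_two (by positivity : (0 : ℝ) < 2 ^ L) hx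
  rw [logb_pow, logb_self_eq_one one_lt_two, mul_one,
    show (2 : ℝ) ^ L - (2 ^ L - M + 1) = M - 1 by ring] at hlog
  rw [logb_choose_sub_logb_div_choose hδM hMle, ge_iff_le]
  have hscaled := mul_le_mul_of_nonneg_left hlog (Nat.cast_nonneg δ : (0 : ℝ) ≤ δ)
  calc (δ : ℝ) * L - δ * (M - 1) * logb 2 (exp 1) / (2 ^ L - M + 1) - logb 2 δ.factorial
      = δ * (L - (M - 1) * logb 2 (exp 1) / (2 ^ L - M + 1)) - logb 2 δ.factorial := by ring
    _ ≤ _ := by linarith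

/-- Redundancy lower bound computation of Theorem 1:
`log₂ C(2^L, M) − log₂ (C(2^L, M−δ) / C(M, M−δ))
  ≥ δL − δ(M−1)log₂ e /(2^L − M + 1) − log₂(δ!)`. -/
theorem stmt_2 (L M δ : ℕ) (hL : 1 ≤ L) (hM : 1 ≤ M) (hMle : M ≤ 2 ^ L)
    (hδ : 1 ≤ δ) (hδM : δ ≤ M) :
    Real.logb 2 (Nat.choose (2 ^ L) M) -
      Real.logb 2 ((Nat.choose (2 ^ L) (M - δ) : ℝ) / (Nat.choose M (M - δ) : ℝ)) ≥
    (δ : ℝ) * L - (δ : ℝ) * ((M : ℝ) - 1) * Real.logb 2 (Real.exp 1) /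
        ((2 ^ L : ℝ) - (M : ℝ) + 1) - Real.logb 2 (Nat.factorial δ) :=
  stmt_2_general L M δ hMle hδM
end

section
/- Let δ, M, L, L₁, L₂ be positive integers with log₂ M ≤ L₁, M ≤ 2^{L₁}, μ = 2δ+1 ≤ M − δ, L₁ = 2·log₂ M, L₂ = log₂ M, and L ≥ L₁ + L₂ + δ(L₁+1). Then log₂ C(2^L, M) − [ log₂ C(2^{L₁}, M) + μ(L − L₁ − L₂ − δ(L₁+1)) + (M − δ − μ)( log₂(2^{L₂} − 1) + L − L₁ − L₂ ) ] ≤ δ(L − L₁) + μ(L₂ + δ(L₁+1)) + M²·log₂(e)/(2^{L₁} − M) + (M − δ − μ)·log₂(e)/(2^{L₂} − 1). -/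
/-!
From `C(N, M) · M! ≤ N^M` and `(K − M)^M ≤ C(K, M) · M!` one gets
`log₂ C(2^L, M) − log₂ C(2^{L₁}, M) ≤ M (L − L₁) + M (L₁ − log₂ (2^{L₁} − M))`, and
`log (a / b) ≤ a / b − 1` bounds `n − log₂ (2^n − x)` by `x log₂ e / (2^n − x)`; applied with
`x = M, n = L₁` and with `x = 1, n = L₂`, what remains is a ring identity in `δ, μ, L, L₁, L₂`.
-/

open Real

namespace Real

variable {B : ℝ}

theorem logb_sub_logb_le (hB : 1 < B) {a b : ℝ} (ha : 0 < a) (hb : 0 < b) :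
    logb B a - logb B b ≤ (a - b) / b * logb B (exp 1) := by
  have hlogB : 0 < log B := log_pos hB
  have hlog : log (a / b) ≤ (a - b) / b := by
    simpa [sub_div, hb.ne'] using log_le_sub_one_of_pos (div_pos ha hb)
  rw [logb, logb, logb, log_exp, ← sub_div, ← log_div ha.ne' hb.ne', mul_one_div]
  gcongr

theorem natCast_sub_logb_pow_sub_le (hB : 1 < B) (n : ℕ) {x : ℝ} (hx : x < B ^ n) :
    n - logb B (B ^ n - x) ≤ x * logb B (exp 1) / (B ^ n - x) := by
  have key := logb_sub_logb_le hB (by positivity : 0 < B ^ n) (sub_pos.2 hx)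
  rwa [logb_pow, logb_self_eq_one hB, mul_one, sub_sub_cancel, div_mul_eq_mul_div] at key

end Real

theorem Nat.choose_mul_pow_sub_le (N K M : ℕ) :
    N.choose M * (K - M) ^ M ≤ K.choose M * N ^ M :=
  calc N.choose M * (K - M) ^ M
      ≤ N.choose M * K.descFactorial M := by
        gcongr
        exact (Nat.pow_le_pow_left (by omega) M).trans (Nat.pow_sub_le_descFactorial K M)
    _ = K.choose M * N.descFactorial M := by
        rw [Nat.descFactorial_eq_factorial_mul_choose, Nat.descFactorial_eq_factorial_mul_choose]
        ring
    _ ≤ K.choose M * N ^ M := by gcongr; exact Nat.descFactorial_le_pow N M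

theorem logb_choose_sub_logb_choose_le {B : ℝ} (hB : 1 < B) {N K M : ℕ} (hMN : M ≤ N)
    (hMK : M < K) :
    logb B (N.choose M) - logb B (K.choose M) ≤ M * (logb B N - logb B ((K : ℝ) - M)) := by
  have hKM : (0 : ℝ) < K - M := sub_pos.2 (by exact_mod_cast hMK)
  have hchooseN : (0 : ℝ) < N.choose M := by exact_mod_cast Nat.choose_pos hMN
  have hchooseK : (0 : ℝ) < K.choose M := by exact_mod_cast Nat.choose_pos hMK.le
  have hcast : (N.choose M : ℝ) * ((K : ℝ) - M) ^ M ≤ K.choose M * (N : ℝ) ^ M := by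
    rw [← Nat.cast_sub hMK.le]
    exact_mod_cast Nat.choose_mul_pow_sub_le N K M
  have hlhs : 0 < (N.choose M : ℝ) * ((K : ℝ) - M) ^ M := by positivity
  have hNM : (N : ℝ) ^ M ≠ 0 := right_ne_zero_of_mul (hlhs.trans_le hcast).ne'
  have key := logb_le_logb_of_le hB hlhs hcast
  rw [logb_mul hchooseN.ne' (pow_ne_zero _ hKM.ne'), logb_mul hchooseK.ne' hNM,
    logb_pow, logb_pow] at key
  linarith

theorem logb_choose_two_pow_sub_le {L L₁ M : ℕ} (hL : L₁ ≤ L) (hM : M < 2 ^ L₁) :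
    logb 2 ((2 ^ L).choose M) - logb 2 ((2 ^ L₁).choose M) ≤
      M * ((L : ℝ) - L₁) + (M : ℝ) ^ 2 * logb 2 (exp 1) / ((2 : ℝ) ^ L₁ - M) := by
  have hMR : (M : ℝ) < 2 ^ L₁ := by exact_mod_cast hM
  have hchoose := logb_choose_sub_logb_choose_le one_lt_two
    (hM.le.trans (Nat.pow_le_pow_right two_pos hL)) hM
  have hgap := natCast_sub_logb_pow_sub_le one_lt_two L₁ hMR
  push_cast at hchoose
  rw [logb_pow, logb_self_eq_one one_lt_two, mul_one] at hchoose
  calc logb 2 ((2 ^ L).choose M) - logb 2 ((2 ^ L₁).choose M)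
      ≤ M * ((L : ℝ) - L₁) + M * (L₁ - logb 2 ((2 : ℝ) ^ L₁ - M)) := by linarith
    _ ≤ M * ((L : ℝ) - L₁) + M * (M * logb 2 (exp 1) / ((2 : ℝ) ^ L₁ - M)) := by gcongr
    _ = M * ((L : ℝ) - L₁) + (M : ℝ) ^ 2 * logb 2 (exp 1) / ((2 : ℝ) ^ L₁ - M) := by ring

theorem stmt_14_general (δ M L L₁ L₂ m μ : ℕ)
    (hm : 0 < m) (hM : M = 2 ^ m)
    (hL₁ : L₁ = 2 * m) (hL₂ : L₂ = m)
    (hμM : μ ≤ M - δ) (hδM : δ ≤ M)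
    (hL : L₁ + L₂ + δ * (L₁ + 1) ≤ L) :
    Real.logb 2 (Nat.choose (2 ^ L) M) -
        (Real.logb 2 (Nat.choose (2 ^ L₁) M) +
          (μ : ℝ) * ((L : ℝ) - L₁ - L₂ - δ * (L₁ + 1)) +
          ((M : ℝ) - δ - μ) *
            (Real.logb 2 ((2 : ℝ) ^ L₂ - 1) + ((L : ℝ) - L₁ - L₂))) ≤
      (δ : ℝ) * ((L : ℝ) - L₁) + (μ : ℝ) * ((L₂ : ℝ) + δ * (L₁ + 1)) +
        (M : ℝ) ^ 2 * Real.logb 2 (Real.exp 1) / ((2 : ℝ) ^ L₁ - M) +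
        ((M : ℝ) - δ - μ) * Real.logb 2 (Real.exp 1) / ((2 : ℝ) ^ L₂ - 1) := by
  have hM_lt : M < 2 ^ L₁ := by
    have : 2 ≤ M := hM ▸ Nat.le_self_pow hm.ne' 2
    rw [hL₁, pow_mul', ← hM]
    nlinarith
  have hchoose := logb_choose_two_pow_sub_le (L := L) (by omega) hM_lt
  have hlogb := natCast_sub_logb_pow_sub_le one_lt_two L₂ (x := 1)
    (one_lt_pow₀ one_lt_two (by omega))
  have hcount : (0 : ℝ) ≤ M - δ - μ := by
    rw [sub_sub, sub_nonneg]
    exact_mod_cast (by omega : δ + μ ≤ M)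
  linear_combination hchoose + mul_le_mul_of_nonneg_left hlogb hcount

/-- Redundancy computation of Corollary 1. With `M = 2^m`, `L₁ = 2m`,
`L₂ = m`, `μ = 2δ+1 ≤ M − δ` and `L ≥ L₁ + L₂ + δ(L₁+1)`:
`log₂ C(2^L, M) − [log₂ C(2^{L₁}, M) + μ(L−L₁−L₂−δ(L₁+1))
  + (M−δ−μ)(log₂(2^{L₂}−1) + L−L₁−L₂)]
  ≤ δ(L−L₁) + μ(L₂+δ(L₁+1)) + M²log₂ e/(2^{L₁}−M) + (M−δ−μ)log₂ e/(2^{L₂}−1)`. -/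
theorem stmt_14 (δ M L L₁ L₂ m μ : ℕ)
    (hδ : 0 < δ) (hm : 0 < m) (hM : M = 2 ^ m)
    (hL₁ : L₁ = 2 * m) (hL₂ : L₂ = m) (hμ : μ = 2 * δ + 1)
    (hμM : μ ≤ M - δ) (hδM : δ ≤ M)
    (hL : L₁ + L₂ + δ * (L₁ + 1) ≤ L) :
    Real.logb 2 (Nat.choose (2 ^ L) M) -
        (Real.logb 2 (Nat.choose (2 ^ L₁) M) +
          (μ : ℝ) * ((L : ℝ) - L₁ - L₂ - δ * (L₁ + 1)) +
          ((M : ℝ) - δ - μ) *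
            (Real.logb 2 ((2 : ℝ) ^ L₂ - 1) + ((L : ℝ) - L₁ - L₂))) ≤
      (δ : ℝ) * ((L : ℝ) - L₁) + (μ : ℝ) * ((L₂ : ℝ) + δ * (L₁ + 1)) +
        (M : ℝ) ^ 2 * Real.logb 2 (Real.exp 1) / ((2 : ℝ) ^ L₁ - M) +
        ((M : ℝ) - δ - μ) * Real.logb 2 (Real.exp 1) / ((2 : ℝ) ^ L₂ - 1) :=
  stmt_14_general δ M L L₁ L₂ m μ hm hM hL₁ hL₂ hμM hδM hL
end
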